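/- Let n = 3^k and let j satisfy 2 ≤ j ≤ k. Then the orbit of the cubic MRS function f_j = (1, 3^{k−j}+1, 2·3^{k−j}+1) under the action of G_n has exactly 3^{j−1} elements, and it is the only orbit of size 3^{j−1}. -/

import Mathlib

/-- Boolean functions in `n` variables, with variables indexed by `ZMod n`
(index `i : ZMod n` corresponds to the variable `x_{i+1}` in 1-indexed notation,
so that "`a Mod n`" arithmetic on subscripts becomes arithmetic in `ZMod n`). -/
abbrev BF (n : ℕ) := (ZMod n → ZMod 2) → ZMod 2

/-- The cubic MRS function `(1,j,k)` in `n` variables: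
`x ↦ Σ_{i=1}^n x_i x_{(i+j-1) Mod n} x_{(i+k-1) Mod n}`, the sum taken in `GF(2)`. -/
def cubicMRS (n : ℕ) [NeZero n] (j k : ℕ) : BF n :=
  fun x => ∑ i : ZMod n,
    x i * x (i + ((j - 1 : ℕ) : ZMod n)) * x (i + ((k - 1 : ℕ) : ZMod n))

/-- `C_n`: the set of all cubic MRS functions `(1,j,k)`, `1 < j < k ≤ n`, in `n` variables. -/
def cubicSet (n : ℕ) [NeZero n] : Set (BF n) :=
  {f | ∃ j k : ℕ, 1 < j ∧ j < k ∧ k ≤ n ∧ f = cubicMRS n j k}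

/-- The set of cubic MRS functions `(1,j,k)` with `1 < j, k ≤ n`, `j ≠ k`. -/
def cubicSetNe (n : ℕ) [NeZero n] : Set (BF n) :=
  {f | ∃ j k : ℕ, 1 < j ∧ j ≤ n ∧ 1 < k ∧ k ≤ n ∧ j ≠ k ∧ f = cubicMRS n j k}

/-- The action of a permutation `μ` of the variables on a Boolean function:
`(μ·f)(x₁,…,xₙ) = f(x_{μ(1)},…,x_{μ(n)})`. -/
def permAct {n : ℕ} (μ : Equiv.Perm (ZMod n)) (f : BF n) : BF n :=
  fun x => f (fun i => x (μ i))

/-- A Boolean function is rotation symmetric if it is invariant under the cyclic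
shift of the variables. -/
def rotSym {n : ℕ} (f : BF n) : Prop :=
  ∀ x : ZMod n → ZMod 2, f (fun i => x (i + 1)) = f x

/-- A permutation `μ` preserves rotation symmetry (for cubic MRS functions in `n`
variables) if `μ·f` is rotation symmetric for every cubic MRS function `f`. -/
def preservesRS (n : ℕ) [NeZero n] (μ : Equiv.Perm (ZMod n)) : Prop :=
  ∀ f ∈ cubicSetNe n, rotSym (permAct μ f)

/-- The permutation `σ_{τ,n} : i ↦ ((i-1)τ + 1) Mod n` of the variables, for `τ` a
unit mod `n`; in the 0-indexed coordinates used here it is `i ↦ τ·i` on `ZMod n`. -/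
def sigmaPerm {n : ℕ} (u : (ZMod n)ˣ) : Equiv.Perm (ZMod n) where
  toFun := fun i => (u : ZMod n) * i
  invFun := fun i => ((u⁻¹ : (ZMod n)ˣ) : ZMod n) * i
  left_inv := fun i => by simp [← mul_assoc]
  right_inv := fun i => by simp [← mul_assoc]

/-- The orbit of a Boolean function `f` under the action of the group
`G_n = {σ_{τ,n} : gcd(τ,n) = 1}`. -/
def orbit (n : ℕ) [NeZero n] (f : BF n) : Set (BF n) :=
  {g | ∃ u : (ZMod n)ˣ, g = permAct (sigmaPerm u) f}

/-- The set of orbits of the action of `G_n` on the set `C_n` of cubic MRS functions. -/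
def orbitsOn (n : ℕ) [NeZero n] : Set (Set (BF n)) :=
  {S | ∃ f ∈ cubicSet n, S = orbit n f}


/-! Write `mrs n a b` for `x ↦ Σᵢ xᵢ x_{i+a} x_{i+b}`, so `(1, j, k) = mrs n (j-1) (k-1)` and a
unit `u` acts by `(a, b) ↦ (u a, u b)`. For odd `n`, `mrs n a b` determines the triangle
`{0, a, b}` up to translation: evaluated at the indicator vector of a triangle it counts (mod 2) the
translates of `{0, a, b}` inside it, and for the triangle itself that count is the order of its
translation stabilizer, which divides `n` and so is odd.

Hence if `n = d e` with `d > 1`, the stabilizer of `mrs n e (2e)` is the preimage of `{±1}` under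
`(ZMod n)ˣ → (ZMod d)ˣ`, and its orbit has `φ(d)/2` elements, which is `3^(j-1)` for `n = 3^k`,
`e = 3^(k-j)`. Conversely, an orbit of odd size has a stabilizer of odd index, which must contain
`-1`. A triangle that is a translate of its negative is an arithmetic progression `{0, c, 2c}`,
and `c = u e` with `u` a unit and `e ∣ n`; so the orbit is that of `mrs n e (2e)`, and its size
`3^(j-1)` forces `e = 3^(k-j)`. -/

open Finset Pointwise

theorem Nat.exists_lt_eq_pow_of_mul_eq_prime_pow {p k d e : ℕ} (hp : p.Prime)
    (hde : d * e = p ^ k) (hd : 1 < d) : ∃ m < k, e = p ^ m := by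
  obtain ⟨m, hm, rfl⟩ := (Nat.dvd_prime_pow hp).mp (Dvd.intro_left d hde)
  refine ⟨m, hm.lt_of_ne ?_, rfl⟩
  rintro rfl
  exact hd.ne' ((mul_eq_right₀ (pow_ne_zero m hp.ne_zero)).mp hde)

theorem ZMod.two_mul_ne_zero_of_odd {n : ℕ} (hn : Odd n) {c : ZMod n} (hc : c ≠ 0) :
    2 * c ≠ 0 := by
  have h2 := (ZMod.isUnit_iff_coprime 2 n).mpr (Nat.coprime_two_left.mpr hn)
  rw [Nat.cast_ofNat] at h2
  exact h2.mul_right_eq_zero.not.mpr hc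

theorem ZMod.mul_natCast_eq_zero_iff {n d e : ℕ} [NeZero n] (hde : d * e = n) (x : ZMod n) :
    x * e = 0 ↔ ZMod.castHom (Dvd.intro e hde) (ZMod d) x = 0 := by
  have he : 0 < e := Nat.pos_of_ne_zero (right_ne_zero_of_mul (hde ▸ NeZero.ne n))
  obtain ⟨v, rfl⟩ : ∃ v : ℕ, (v : ZMod n) = x := ⟨x.val, ZMod.natCast_zmod_val x⟩
  rw [← Nat.cast_mul, map_natCast, ZMod.natCast_eq_zero_iff, ZMod.natCast_eq_zero_iff]
  exact hde ▸ Nat.mul_dvd_mul_iff_right he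

theorem ZMod.orderOf_units_neg_one {d : ℕ} (hd : 2 < d) : orderOf (-1 : (ZMod d)ˣ) = 2 := by
  have : Fact (1 < d) := ⟨by omega⟩
  rw [← orderOf_units, Units.val_neg, Units.val_one, orderOf_neg_one, ZMod.ringChar_zmod_n,
    if_neg hd.ne']

theorem Units.mem_zpowers_neg_one_iff {R : Type*} [Ring R] {w : Rˣ} :
    w ∈ Subgroup.zpowers (-1) ↔ w = 1 ∨ w = -1 := by
  refine ⟨fun ⟨k, hk⟩ => hk ▸ k.even_or_odd.imp Even.neg_one_zpow Odd.neg_one_zpow, ?_⟩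
  rintro (rfl | rfl)
  exacts [one_mem _, Subgroup.mem_zpowers _]

theorem MulAction.mem_stabilizer_of_odd_ncard_orbit {G X : Type*} [CommGroup G] [MulAction G X]
    {x : X} (hx : Odd (orbit G x).ncard) {g : G} (hg : g ^ 2 = 1) : g ∈ stabilizer G x := by
  have hpow := (stabilizer G x).pow_index_mem g
  obtain ⟨m, hm⟩ := hx
  rwa [index_stabilizer, hm, pow_succ, pow_mul, hg, one_pow, one_mul] at hpow

@[simp]
theorem sigmaPerm_apply {n : ℕ} (u : (ZMod n)ˣ) (i : ZMod n) : sigmaPerm u i = u * i := rfl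

/-- `f ↦ f ∘ σ_u` is a right action, hence a left one since `(ZMod n)ˣ` is commutative. -/
instance instMulActionUnitsBF (n : ℕ) : MulAction (ZMod n)ˣ (BF n) where
  smul u f := permAct (sigmaPerm u) f
  one_smul f := funext fun x => by simp [HSMul.hSMul, permAct]
  mul_smul u v f := funext fun x => by simp [HSMul.hSMul, permAct, mul_assoc]

theorem orbit_eq_mulActionOrbit (n : ℕ) [NeZero n] (f : BF n) :
    orbit n f = MulAction.orbit (ZMod n)ˣ f := by
  ext g
  exact ⟨fun ⟨u, hu⟩ => ⟨u, hu.symm⟩, fun ⟨u, hu⟩ => ⟨u, hu.symm⟩⟩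

section Mrs

variable {n : ℕ} [NeZero n]

variable (n) in
def mrs (a b : ZMod n) : BF n := fun x => ∑ i, x i * x (i + a) * x (i + b)

theorem cubicMRS_eq_mrs (p q : ℕ) :
    cubicMRS n p q = mrs n ((p - 1 : ℕ) : ZMod n) ((q - 1 : ℕ) : ZMod n) := rfl

theorem cubicMRS_add_one (e : ℕ) : cubicMRS n (e + 1) (2 * e + 1) = mrs n e (2 * e) := by
  simp [cubicMRS_eq_mrs]

theorem exists_mrs_of_mem_cubicSet {f : BF n} (hf : f ∈ cubicSet n) :
    ∃ a b : ZMod n, a ≠ 0 ∧ b ≠ 0 ∧ a ≠ b ∧ f = mrs n a b := by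
  obtain ⟨p, q, hp, hpq, hq, rfl⟩ := hf
  have hcast : ∀ r s : ℕ, r < n → s < n → ((r : ZMod n) = s ↔ r = s) := fun r s hr hs => by
    rw [ZMod.natCast_eq_natCast_iff', Nat.mod_eq_of_lt hr, Nat.mod_eq_of_lt hs]
  refine ⟨_, _, ?_, ?_, ?_, cubicMRS_eq_mrs p q⟩
  · rw [Ne, ← Nat.cast_zero, hcast (p - 1) 0 (by omega) (by omega)]; omega
  · rw [Ne, ← Nat.cast_zero, hcast (q - 1) 0 (by omega) (by omega)]; omega
  · rw [Ne, hcast (p - 1) (q - 1) (by omega) (by omega)]; omega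

theorem smul_mrs (u : (ZMod n)ˣ) (a b : ZMod n) : u • mrs n a b = mrs n (u * a) (u * b) := by
  funext x
  exact Fintype.sum_equiv (sigmaPerm u) _ _ fun i => by simp [mul_add]

theorem mrs_comm (a b : ZMod n) : mrs n a b = mrs n b a := by
  funext x
  exact sum_congr rfl fun i _ => by ring

theorem mrs_eq_mrs_sub_neg (a b : ZMod n) : mrs n a b = mrs n (b - a) (-a) := by
  funext x
  exact Fintype.sum_equiv (Equiv.addRight a) _ _ fun i => by
    rw [Equiv.coe_addRight, add_add_sub_cancel, add_neg_cancel_right]; ring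

theorem mrs_neg_eq_mrs_two_mul (a : ZMod n) : mrs n a (-a) = mrs n a (2 * a) := by
  rw [mrs_eq_mrs_sub_neg a (2 * a), two_mul, add_sub_cancel_right]

theorem mrs_neg_two_mul_neg (c : ZMod n) : mrs n (-c) (2 * -c) = mrs n c (2 * c) := by
  rw [← mrs_neg_eq_mrs_two_mul, neg_neg, mrs_comm, mrs_neg_eq_mrs_two_mul]

theorem mrs_apply_indicator (a b : ZMod n) (T : Finset (ZMod n)) :
    mrs n a b (fun i => if i ∈ T then 1 else 0) =
      (#{i | i ∈ T ∧ i + a ∈ T ∧ i + b ∈ T} : ZMod 2) := by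
  rw [card_filter, Nat.cast_sum]
  refine sum_congr rfl fun i _ => ?_
  by_cases h₀ : i ∈ T <;> by_cases ha : i + a ∈ T <;> by_cases hb : i + b ∈ T <;> simp [*]

theorem odd_card_vadd_subset (hn : Odd n) (T : Finset (ZMod n)) :
    Odd (#{i : ZMod n | i +ᵥ T ⊆ T}) := by
  have hstab : #{i : ZMod n | i +ᵥ T ⊆ T} = Nat.card (AddAction.stabilizer (ZMod n) T) := by
    rw [Nat.card_eq_fintype_card, Fintype.card_subtype]
    congr 1
    ext i
    simp only [mem_filter, mem_univ, true_and, AddAction.mem_stabilizer_iff]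
    exact ⟨fun h => eq_of_subset_of_card_le h (card_vadd_finset i T).ge, fun h => h.subset⟩
  obtain ⟨d, hd⟩ := AddSubgroup.card_addSubgroup_dvd_card (AddAction.stabilizer (ZMod n) T)
  rw [Nat.card_zmod] at hd
  rw [hstab]
  exact (Nat.odd_mul.mp (hd ▸ hn)).1

theorem mrs_apply_indicator_self (hn : Odd n) (a b : ZMod n) :
    mrs n a b (fun i => if i ∈ ({0, a, b} : Finset (ZMod n)) then 1 else 0) = 1 := by
  rw [mrs_apply_indicator, ZMod.natCast_eq_one_iff_odd]
  convert odd_card_vadd_subset hn {0, a, b} using 3 with i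
  simp [vadd_finset_insert, insert_subset_iff]

/-- The six cases are the six ways of matching `{0, a, b}` with a translate of `{0, a', b'}`. -/
theorem mrs_eq_mrs_cases (hn : Odd n) {a b a' b' : ZMod n} (ha : a ≠ 0) (hb : b ≠ 0)
    (hab : a ≠ b) (h : mrs n a b = mrs n a' b') :
    (a' = a ∧ b' = b) ∨ (a' = b ∧ b' = a) ∨ (a' = -a ∧ b' = b - a) ∨
      (a' = b - a ∧ b' = -a) ∨ (a' = -b ∧ b' = a - b) ∨ (a' = a - b ∧ b' = -b) := by
  have hself := mrs_apply_indicator_self hn a' b'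
  rw [← h, mrs_apply_indicator, ZMod.natCast_eq_one_iff_odd] at hself
  obtain ⟨i, hi⟩ := card_pos.mp hself.pos
  simp only [mem_filter, mem_univ, true_and, mem_insert, mem_singleton] at hi
  grind (splits := 30)

theorem smul_mrs_two_mul_eq_iff (hn : Odd n) {c : ZMod n} (hc : c ≠ 0) (w : (ZMod n)ˣ) :
    w • mrs n c (2 * c) = mrs n c (2 * c) ↔ (w : ZMod n) * c = c ∨ (w : ZMod n) * c = -c := by
  rw [smul_mrs, mul_left_comm]
  refine ⟨fun h => ?_, ?_⟩
  · have := mrs_eq_mrs_cases hn hc (ZMod.two_mul_ne_zero_of_odd hn hc)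
      (fun h2 => hc (by linear_combination -h2)) h.symm
    grind
  · rintro (h | h) <;> rw [h]
    exact mrs_neg_two_mul_neg c

theorem exists_mrs_eq_mrs_two_mul (hn : Odd n) {a b : ZMod n} (ha : a ≠ 0) (hb : b ≠ 0)
    (hab : a ≠ b) (h : (-1 : (ZMod n)ˣ) • mrs n a b = mrs n a b) :
    ∃ c ≠ 0, mrs n a b = mrs n c (2 * c) := by
  rw [smul_mrs, Units.val_neg, Units.val_one, neg_one_mul, neg_one_mul] at h
  rcases mrs_eq_mrs_cases hn ha hb hab h.symm with
    ⟨h₁, -⟩ | ⟨-, h₂⟩ | ⟨-, h₂⟩ | ⟨h₁, -⟩ | ⟨h₁, -⟩ | ⟨h₁, -⟩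
  · exact absurd (by linear_combination -h₁) (ZMod.two_mul_ne_zero_of_odd hn ha)
  · exact ⟨a, ha, by rw [← mrs_neg_eq_mrs_two_mul, ← h₂, neg_neg]⟩
  · exact ⟨b, hb, by rw [mrs_comm, show a = 2 * b by linear_combination h₂]⟩
  · exact absurd (by linear_combination -h₁) hb
  · exact absurd (by linear_combination -h₁) hab
  · exact ⟨a, ha, by rw [show b = 2 * a by linear_combination h₁]⟩

theorem exists_orbit_mrs_two_mul_eq {c : ZMod n} (hc : c ≠ 0) :
    ∃ d e : ℕ, d * e = n ∧ 1 < d ∧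
      MulAction.orbit (ZMod n)ˣ (mrs n c (2 * c)) =
        MulAction.orbit (ZMod n)ˣ (mrs n e (2 * e)) := by
  obtain ⟨e, ⟨d, hd⟩, u, hu, rfl⟩ := ZMod.eq_unit_mul_divisor c
  refine ⟨d, e, by rw [hd, mul_comm], ?_, ?_⟩
  · by_contra! hd1
    interval_cases d
    · exact NeZero.ne n (by simpa using hd)
    · rw [mul_one] at hd
      subst hd
      exact hc (by simp)
  · rw [← MulAction.orbit_smul hu.unit (mrs n e (2 * e)), smul_mrs, IsUnit.unit_spec,
      mul_left_comm]

theorem stabilizer_mrs_two_mul {d e : ℕ} (hn : Odd n) (hde : d * e = n) (hd : 1 < d) :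
    MulAction.stabilizer (ZMod n)ˣ (mrs n e (2 * e)) =
      (Subgroup.zpowers (-1)).comap (ZMod.unitsMap (Dvd.intro e hde)) := by
  have : Fact (1 < d) := ⟨hd⟩
  have he : (e : ZMod n) ≠ 0 := by
    rw [← one_mul (e : ZMod n), Ne, ZMod.mul_natCast_eq_zero_iff hde, map_one]
    exact one_ne_zero
  ext w
  rw [MulAction.mem_stabilizer_iff, smul_mrs_two_mul_eq_iff hn he, Subgroup.mem_comap,
    Units.mem_zpowers_neg_one_iff, Units.ext_iff, Units.ext_iff, ZMod.unitsMap_val,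
    ← sub_eq_zero, ← sub_one_mul, ZMod.mul_natCast_eq_zero_iff hde, eq_neg_iff_add_eq_zero,
    ← add_one_mul, ZMod.mul_natCast_eq_zero_iff hde, map_sub, map_add, map_one, sub_eq_zero,
    add_eq_zero_iff_eq_neg, Units.val_neg, Units.val_one, ZMod.castHom_apply]

theorem ncard_orbit_mrs_two_mul {d e : ℕ} (hn : Odd n) (hde : d * e = n) (hd : 1 < d) :
    (MulAction.orbit (ZMod n)ˣ (mrs n e (2 * e))).ncard = Nat.totient d / 2 := by
  have hd2 : 2 < d := by
    have : Odd d := hn.of_dvd_nat (Dvd.intro e hde)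
    grind
  rw [← MulAction.index_stabilizer, stabilizer_mrs_two_mul hn hde hd,
    Subgroup.index_comap_of_surjective _ (ZMod.unitsMap_surjective _)]
  have : NeZero d := ⟨by omega⟩
  have h := (Subgroup.zpowers (-1 : (ZMod d)ˣ)).index_mul_card
  rw [Nat.card_zpowers, ZMod.orderOf_units_neg_one hd2, Nat.card_eq_fintype_card,
    ZMod.card_units_eq_totient] at h
  omega

end Mrs

theorem ncard_orbit_mrs_two_mul_three_pow {k m : ℕ} (hm : m < k) :
    (MulAction.orbit (ZMod (3 ^ k))ˣ (mrs (3 ^ k) (3 ^ m : ℕ) (2 * (3 ^ m : ℕ)))).ncard =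
      3 ^ (k - 1 - m) := by
  obtain ⟨r, rfl⟩ := Nat.exists_eq_add_of_lt hm
  rw [ncard_orbit_mrs_two_mul (Odd.pow (by decide)) (d := 3 ^ (r + 1))
    (by rw [← pow_add]; ring_nf) (Nat.one_lt_pow r.succ_ne_zero (by norm_num)),
    Nat.totient_prime_pow_succ Nat.prime_three]
  simp

/-- For `n = 3^k` and `2 ≤ j ≤ k`: the orbit of `f_j = (1, 3^{k-j}+1, 2·3^{k-j}+1)`
under the action of `G_n` has exactly `3^{j-1}` elements, and it is the only orbit of
size `3^{j-1}`. -/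
theorem orbit_fj (k : ℕ) (n : ℕ) (hn : n = 3 ^ k) [NeZero n]
    (j : ℕ) (hj2 : 2 ≤ j) (hjk : j ≤ k) :
    (orbit n (cubicMRS n (3 ^ (k - j) + 1) (2 * 3 ^ (k - j) + 1))).ncard = 3 ^ (j - 1) ∧
    (∀ S ∈ orbitsOn n, S.ncard = 3 ^ (j - 1) →
      S = orbit n (cubicMRS n (3 ^ (k - j) + 1) (2 * 3 ^ (k - j) + 1))) := by
  subst hn
  have hodd : Odd (3 ^ k) := Odd.pow (by decide)
  rw [cubicMRS_add_one, orbit_eq_mulActionOrbit,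
    ncard_orbit_mrs_two_mul_three_pow (by omega : k - j < k),
    show k - 1 - (k - j) = j - 1 by omega]
  refine ⟨rfl, ?_⟩
  rintro S ⟨f, hf, rfl⟩ hS
  obtain ⟨a, b, ha, hb, hab, rfl⟩ := exists_mrs_of_mem_cubicSet hf
  rw [orbit_eq_mulActionOrbit] at hS ⊢
  have hneg : (-1 : (ZMod (3 ^ k))ˣ) • mrs (3 ^ k) a b = mrs (3 ^ k) a b :=
    MulAction.mem_stabilizer_of_odd_ncard_orbit (hS ▸ Odd.pow (by decide)) neg_one_sq
  obtain ⟨c, hc, hac⟩ := exists_mrs_eq_mrs_two_mul hodd ha hb hab hneg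
  obtain ⟨d, e, hde, hd, hce⟩ := exists_orbit_mrs_two_mul_eq hc
  obtain ⟨m, hm, rfl⟩ := Nat.exists_lt_eq_pow_of_mul_eq_prime_pow Nat.prime_three hde hd
  rw [hac, hce, ncard_orbit_mrs_two_mul_three_pow hm] at hS
  rw [hac, hce, show m = k - j by have := Nat.pow_right_injective (by norm_num) hS; omega]
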